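/- arXiv:1710.11476 — 8 statements merged into one kernel-verified Lean document; each statement's English description precedes it below -/
import Mathlib

section
/- Conversely, for any constants C1, C2, C3, C4 ∈ ℂ, the sequences F1(n) = (C1/4)(1+(-1)^n+i^n+(-i)^n) + (C2/4)(1-(-1)^n-i·i^n+i·(-i)^n) + (C3/4)(1+(-1)^n-i^n-(-i)^n) + (C4/4)(1-(-1)^n+i·i^n-i·(-i)^n) and F2(n) = (C3/4)(1+(-1)^n+i^n+(-i)^n) + (C4/4)(1-(-1)^n-i·i^n+i·(-i)^n) + (C1/4)(1+(-1)^n-i^n-(-i)^n) + (C2/4)(1-(-1)^n+i·i^n-i·(-i)^n) satisfy F1(n+2)=F2(n) and F2(n+2)=F1(n) for all n. -/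
open Complex

theorem stmt_1 (C1 C2 C3 C4 : ℂ)
    (F1 : ℕ → ℂ) (F2 : ℕ → ℂ)
    (hF1 : ∀ n : ℕ,
      F1 n = C1 / 4 * (1 + (-1 : ℂ) ^ n + I ^ n + (-I) ^ n)
           + C2 / 4 * (1 - (-1 : ℂ) ^ n - I * I ^ n + I * (-I) ^ n)
           + C3 / 4 * (1 + (-1 : ℂ) ^ n - I ^ n - (-I) ^ n)
           + C4 / 4 * (1 - (-1 : ℂ) ^ n + I * I ^ n - I * (-I) ^ n))
    (hF2 : ∀ n : ℕ,
      F2 n = C3 / 4 * (1 + (-1 : ℂ) ^ n + I ^ n + (-I) ^ n)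
           + C4 / 4 * (1 - (-1 : ℂ) ^ n - I * I ^ n + I * (-I) ^ n)
           + C1 / 4 * (1 + (-1 : ℂ) ^ n - I ^ n - (-I) ^ n)
           + C2 / 4 * (1 - (-1 : ℂ) ^ n + I * I ^ n - I * (-I) ^ n)) :
    ∀ n : ℕ, F1 (n + 2) = F2 n ∧ F2 (n + 2) = F1 n := by
  intro n
  have h1 : ((-1 : ℂ)) ^ (n + 2) = (-1 : ℂ) ^ n := by
    rw [pow_add]; ring
  have h2 : (I : ℂ) ^ (n + 2) = -(I ^ n) := by
    rw [pow_add]; simp [Complex.I_sq]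
  have h3 : ((-I : ℂ)) ^ (n + 2) = -((-I) ^ n) := by
    rw [pow_add]; simp [pow_two]
  constructor <;> rw [hF1, hF2, h1, h2, h3] <;> ring
end

section
/- If x, y : ℕ → ℝ satisfy x(n+2) = (x(n)·y(n+1)+1)/(x(n)+y(n+1)) and y(n+2) = (y(n)·x(n+1)+1)/(y(n)+x(n+1)), with all values of x and y strictly greater than 1, then the functions u(n) = log((x(n)+1)/(x(n)-1)) / log((y(n+1)+1)/(y(n+1)-1)) and v(n) = log((y(n)+1)/(y(n)-1)) / log((x(n+1)+1)/(x(n+1)-1)) satisfy the first-order system u(n+1) = 1/(1+v(n)) and v(n+1) = 1/(1+u(n)). -/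
open Real

lemma logpos_aux (t : ℝ) (ht : 1 < t) : 0 < Real.log ((t + 1) / (t - 1)) := by
  apply Real.log_pos
  rw [one_lt_div (by linarith)]
  linarith

lemma key_aux (a b : ℝ) (ha : 1 < a) (hb : 1 < b) :
    Real.log (((a * b + 1) / (a + b) + 1) / ((a * b + 1) / (a + b) - 1)) =
      Real.log ((a + 1) / (a - 1)) + Real.log ((b + 1) / (b - 1)) := by
  have hab : (0:ℝ) < a + b := by linarith
  have h1 : (a * b + 1) / (a + b) + 1 = (a + 1) * (b + 1) / (a + b) := by
    field_simp; ring
  have h2 : (a * b + 1) / (a + b) - 1 = (a - 1) * (b - 1) / (a + b) := by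
    field_simp; ring
  have h3 : ((a + 1) * (b + 1) / (a + b)) / ((a - 1) * (b - 1) / (a + b)) =
      ((a + 1) / (a - 1)) * ((b + 1) / (b - 1)) := by
    field_simp
  rw [h1, h2, h3, Real.log_mul (ne_of_gt (div_pos (by linarith) (by linarith)))
    (ne_of_gt (div_pos (by linarith) (by linarith)))]

theorem stmt_2 (x y : ℕ → ℝ)
    (hx : ∀ n, 1 < x n) (hy : ∀ n, 1 < y n)
    (hrec1 : ∀ n, x (n + 2) = (x n * y (n + 1) + 1) / (x n + y (n + 1)))
    (hrec2 : ∀ n, y (n + 2) = (y n * x (n + 1) + 1) / (y n + x (n + 1)))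
    (u v : ℕ → ℝ)
    (hu : ∀ n, u n = Real.log ((x n + 1) / (x n - 1)) / Real.log ((y (n + 1) + 1) / (y (n + 1) - 1)))
    (hv : ∀ n, v n = Real.log ((y n + 1) / (y n - 1)) / Real.log ((x (n + 1) + 1) / (x (n + 1) - 1))) :
    ∀ n, u (n + 1) = 1 / (1 + v n) ∧ v (n + 1) = 1 / (1 + u n) := by
  intro n
  set A : ℕ → ℝ := fun n => Real.log ((x n + 1) / (x n - 1)) with hA
  set B : ℕ → ℝ := fun n => Real.log ((y n + 1) / (y n - 1)) with hB
  have hApos : ∀ n, 0 < A n := fun n => logpos_aux _ (hx n)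
  have hBpos : ∀ n, 0 < B n := fun n => logpos_aux _ (hy n)
  have hAstep : A (n + 2) = A n + B (n + 1) := by
    simp only [hA, hB, hrec1 n]
    exact key_aux _ _ (hx n) (hy (n + 1))
  have hBstep : B (n + 2) = B n + A (n + 1) := by
    simp only [hA, hB, hrec2 n]
    exact key_aux _ _ (hy n) (hx (n + 1))
  have hun : u n = A n / B (n + 1) := hu n
  have hvn : v n = B n / A (n + 1) := hv n
  have hun1 : u (n + 1) = A (n + 1) / B (n + 2) := hu (n + 1)
  have hvn1 : v (n + 1) = B (n + 1) / A (n + 2) := hv (n + 1)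
  constructor
  · rw [hun1, hBstep, hvn]
    have h1 := hApos (n + 1)
    have h2 := hBpos n
    have : 1 + B n / A (n + 1) = (B n + A (n + 1)) / A (n + 1) := by
      field_simp; ring
    rw [this, one_div_div]
  · rw [hvn1, hAstep, hun]
    have h1 := hBpos (n + 1)
    have h2 := hApos n
    have : 1 + A n / B (n + 1) = (A n + B (n + 1)) / B (n + 1) := by
      field_simp; ring
    rw [this, one_div_div]
end

section
/- Define α(n) = ((1+√5)^n - (-1+√5)^n) / (2·((1+√5)^{n-1} + (-1+√5)^{n-1})) and β(n) = ((1+√5)^n + (-1+√5)^n) / (2·((1+√5)^{n-1} - (-1+√5)^{n-1})) for n ≥ 1. Then α(n+1) - 1 = 1/β(n) and β(n+1) - 1 = 1/α(n) for all n ≥ 1 (wherever the denominators are nonzero). -/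
noncomputable def alphaSeq (n : ℕ) : ℝ :=
  ((1 + Real.sqrt 5) ^ n - (-1 + Real.sqrt 5) ^ n) /
    (2 * ((1 + Real.sqrt 5) ^ (n - 1) + (-1 + Real.sqrt 5) ^ (n - 1)))

noncomputable def betaSeq (n : ℕ) : ℝ :=
  ((1 + Real.sqrt 5) ^ n + (-1 + Real.sqrt 5) ^ n) /
    (2 * ((1 + Real.sqrt 5) ^ (n - 1) - (-1 + Real.sqrt 5) ^ (n - 1)))

theorem stmt_5 : ∀ n : ℕ, 1 ≤ n →
    (betaSeq n ≠ 0 → alphaSeq (n + 1) - 1 = 1 / betaSeq n) ∧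
    (alphaSeq n ≠ 0 → betaSeq (n + 1) - 1 = 1 / alphaSeq n) := by
  intro n hn
  obtain ⟨m, rfl⟩ : ∃ m, n = m + 1 := ⟨n - 1, by omega⟩
  set s := Real.sqrt 5 with hsdef
  have hs2 : s ^ 2 = 5 := Real.sq_sqrt (by norm_num)
  have hsgt : 2 < s := by nlinarith [Real.sqrt_nonneg 5]
  have hb : (0:ℝ) < -1 + s := by linarith
  have ha : (0:ℝ) < 1 + s := by linarith
  have hpow : (-1+s)^(m+1) < (1+s)^(m+1) :=
    pow_lt_pow_left₀ (by linarith) hb.le (Nat.succ_ne_zero m)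
  have hsum : (0:ℝ) < (1+s)^(m+1) + (-1+s)^(m+1) := by positivity
  have hdiff : (0:ℝ) < (1+s)^(m+1) - (-1+s)^(m+1) := by linarith
  have key1 : (1+s)^(m+2) - (-1+s)^(m+2)
      = 2*((1+s)^(m+1) + (-1+s)^(m+1)) + 4*((1+s)^m - (-1+s)^m) := by
    linear_combination ((1+s)^m - (-1+s)^m) * hs2
  have key2 : (1+s)^(m+2) + (-1+s)^(m+2)
      = 2*((1+s)^(m+1) - (-1+s)^(m+1)) + 4*((1+s)^m + (-1+s)^m) := by
    linear_combination ((1+s)^m + (-1+s)^m) * hs2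
  constructor
  · intro hβ
    have hD : (1+s)^m - (-1+s)^m ≠ 0 := by
      intro h
      apply hβ
      simp [betaSeq, Nat.add_sub_cancel, ← hsdef, h]
    rw [alphaSeq, betaSeq]
    simp only [Nat.add_sub_cancel, ← hsdef]
    rw [show m + 1 + 1 = m + 2 from rfl, key1]
    field_simp
    ring
  · intro _
    have hsum0 : (0:ℝ) < (1+s)^m + (-1+s)^m := by positivity
    rw [betaSeq, alphaSeq]
    simp only [Nat.add_sub_cancel, ← hsdef]
    rw [show m + 1 + 1 = m + 2 from rfl, key2]
    field_simp
    ring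
end

section
/- Let x, y : ℕ → ℂ satisfy x(n+2) = y(n) and y(n+2) = x(n). Then the function φ1(n) = c1(n)·x(n)·x(n+1) + c3(n)·y(n)·y(n+1) + c2(n)·x(n+1)·y(n) + c4(n)·x(n)·y(n+1), where c1(n) = (1+(-1)^n+i^n+(-i)^n)/4, c2(n) = (1-(-1)^n+i·i^n-i·(-i)^n)/4, c3(n) = (1+(-1)^n-i^n-(-i)^n)/4, c4(n) = (1-(-1)^n-i·i^n+i·(-i)^n)/4, is a first integral: φ1(n+1) = φ1(n) for all n. -/
open Complex

noncomputable def c1 (n : ℕ) : ℂ := (1 + (-1 : ℂ) ^ n + I ^ n + (-I) ^ n) / 4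
noncomputable def c2 (n : ℕ) : ℂ := (1 - (-1 : ℂ) ^ n + I * I ^ n - I * (-I) ^ n) / 4
noncomputable def c3 (n : ℕ) : ℂ := (1 + (-1 : ℂ) ^ n - I ^ n - (-I) ^ n) / 4
noncomputable def c4 (n : ℕ) : ℂ := (1 - (-1 : ℂ) ^ n - I * I ^ n + I * (-I) ^ n) / 4

theorem stmt_7 (x y : ℕ → ℂ)
    (hx : ∀ n, x (n + 2) = y n) (hy : ∀ n, y (n + 2) = x n)
    (φ1 : ℕ → ℂ)
    (hφ1 : ∀ n, φ1 n = c1 n * x n * x (n + 1) + c3 n * y n * y (n + 1)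
        + c2 n * x (n + 1) * y n + c4 n * x n * y (n + 1)) :
    ∀ n, φ1 (n + 1) = φ1 n := by
  intro n
  rw [hφ1, hφ1]
  have hx' : x (n+1+1) = y n := hx n
  have hy' : y (n+1+1) = x n := hy n
  rw [hx', hy']
  simp only [c1, c2, c3, c4, pow_succ]
  ring_nf
  rw [I_sq]
  ring
end

section
/- Let x, y : ℕ → ℂ satisfy x(n+2) = y(n) and y(n+2) = x(n). Then φ9(n) = c1(n)·x(n+1) + c3(n)·y(n+1) + c2(n)·y(n) + c4(n)·x(n), with c1(n)=(1+(-1)^n+i^n+(-i)^n)/4, c2(n)=(1-(-1)^n+i·i^n-i·(-i)^n)/4, c3(n)=(1+(-1)^n-i^n-(-i)^n)/4, c4(n)=(1-(-1)^n-i·i^n+i·(-i)^n)/4, satisfies φ9(n+1)=φ9(n) for all n. -/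
open Complex

theorem stmt_8 (x y : ℕ → ℂ)
    (hx : ∀ n, x (n + 2) = y n) (hy : ∀ n, y (n + 2) = x n)
    (φ9 : ℕ → ℂ)
    (hφ9 : ∀ n, φ9 n = c1 n * x (n + 1) + c3 n * y (n + 1)
        + c2 n * y n + c4 n * x n) :
    ∀ n, φ9 (n + 1) = φ9 n := by
  intro n
  have h2 : n + 1 + 1 = n + 2 := rfl
  rw [hφ9, hφ9, h2, hx, hy]
  simp only [c1, c2, c3, c4, pow_succ, Complex.I_mul_I]
  ring_nf
  simp [Complex.I_sq]
  ring
end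

section
/- Let x, y : ℕ → ℂ satisfy x(n+2)=y(n), y(n+2)=x(n). Then φ5(n) = c1(n)·y(n)·x(n+1) + c3(n)·x(n)·y(n+1) + c2(n)·y(n)·y(n+1) + c4(n)·x(n)·x(n+1), where c1(n)=(1+(-1)^n+i^n+(-i)^n)/4, c2(n)=(1-(-1)^n+i·i^n-i·(-i)^n)/4, c3(n)=(1+(-1)^n-i^n-(-i)^n)/4, c4(n)=(1-(-1)^n-i·i^n+i·(-i)^n)/4, satisfies φ5(n+1)=φ5(n) for all n. -/
open Complex

theorem stmt_9 (x y : ℕ → ℂ)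
    (hx : ∀ n, x (n + 2) = y n) (hy : ∀ n, y (n + 2) = x n)
    (φ5 : ℕ → ℂ)
    (hφ5 : ∀ n, φ5 n = c1 n * y n * x (n + 1) + c3 n * x n * y (n + 1)
        + c2 n * y n * y (n + 1) + c4 n * x n * x (n + 1)) :
    ∀ n, φ5 (n + 1) = φ5 n := by
  intro n
  rw [hφ5, hφ5, show n+1+1 = n+2 from rfl, hx, hy]
  simp only [c1, c2, c3, c4, pow_succ]
  ring_nf
  simp only [Complex.I_sq]
  ring
end

section
/- Let u, v : ℕ → ℝ satisfy u(n+1) = 1/(1+v(n)) and v(n+1) = 1/(1+u(n)), with u(0), v(0) > 0. Then u(n) > 0 and v(n) > 0 for all n, and both u(n) and v(n) converge to 1/φ = (√5 - 1)/2 as n → ∞. -/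
theorem stmt_13 (u v : ℕ → ℝ)
    (hu0 : 0 < u 0) (hv0 : 0 < v 0)
    (hrec1 : ∀ n, u (n + 1) = 1 / (1 + v n))
    (hrec2 : ∀ n, v (n + 1) = 1 / (1 + u n)) :
    (∀ n, 0 < u n ∧ 0 < v n) ∧
    Filter.Tendsto u Filter.atTop (nhds ((Real.sqrt 5 - 1) / 2)) ∧
    Filter.Tendsto v Filter.atTop (nhds ((Real.sqrt 5 - 1) / 2)) := by
  set L : ℝ := (Real.sqrt 5 - 1) / 2 with hLdef
  have h5 : Real.sqrt 5 ^ 2 = 5 := Real.sq_sqrt (by norm_num)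
  have hnn : 0 ≤ Real.sqrt 5 := Real.sqrt_nonneg 5
  have h2 : 2 < Real.sqrt 5 := by nlinarith
  have h3 : Real.sqrt 5 < 3 := by nlinarith
  have hL0 : 0 < L := by rw [hLdef]; linarith
  have hL1 : L < 1 := by rw [hLdef]; linarith
  have hLL : L * (1 + L) = 1 := by rw [hLdef]; nlinarith
  have hpos : ∀ n, 0 < u n ∧ 0 < v n := by
    intro n
    induction n with
    | zero => exact ⟨hu0, hv0⟩
    | succ n ih =>
      refine ⟨?_, ?_⟩
      · rw [hrec1 n]; exact div_pos one_pos (by linarith [ih.2])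
      · rw [hrec2 n]; exact div_pos one_pos (by linarith [ih.1])
  have key : ∀ x : ℝ, 0 < x → |1 / (1 + x) - L| ≤ L * |x - L| := by
    intro x hx
    have h1x : (0:ℝ) < 1 + x := by linarith
    have heq : 1 / (1 + x) - L = L * (L - x) / (1 + x) := by
      field_simp
      nlinarith
    rw [heq, abs_div, abs_of_pos h1x, abs_mul, abs_of_pos hL0, abs_sub_comm]
    rw [div_le_iff₀ h1x]
    nlinarith [mul_nonneg (mul_nonneg hL0.le (abs_nonneg (x - L))) hx.le]
  set M : ℕ → ℝ := fun n => max |u n - L| |v n - L| with hM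
  have hMstep : ∀ n, M (n + 1) ≤ L * M n := by
    intro n
    refine max_le ?_ ?_
    · rw [hrec1 n]
      calc |1 / (1 + v n) - L| ≤ L * |v n - L| := key _ (hpos n).2
        _ ≤ L * M n := by
            apply mul_le_mul_of_nonneg_left (le_max_right _ _) hL0.le
    · rw [hrec2 n]
      calc |1 / (1 + u n) - L| ≤ L * |u n - L| := key _ (hpos n).1
        _ ≤ L * M n := by
            apply mul_le_mul_of_nonneg_left (le_max_left _ _) hL0.le
  have hMbound : ∀ n, M n ≤ L ^ n * M 0 := by
    intro n
    induction n with
    | zero => simp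
    | succ n ih =>
      calc M (n + 1) ≤ L * M n := hMstep n
        _ ≤ L * (L ^ n * M 0) := mul_le_mul_of_nonneg_left ih hL0.le
        _ = L ^ (n + 1) * M 0 := by ring
  have hM0 : ∀ n, 0 ≤ M n := fun n => le_max_of_le_left (abs_nonneg _)
  have hgeo : Filter.Tendsto (fun n => L ^ n * M 0) Filter.atTop (nhds 0) := by
    have := (tendsto_pow_atTop_nhds_zero_of_lt_one hL0.le hL1).mul_const (M 0)
    simpa using this
  have hMten : Filter.Tendsto M Filter.atTop (nhds 0) :=
    squeeze_zero hM0 hMbound hgeo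
  have huten : Filter.Tendsto (fun n => u n - L) Filter.atTop (nhds 0) :=
    squeeze_zero_norm (fun n => by
      rw [Real.norm_eq_abs]; exact le_max_left _ _) hMten
  have hvten : Filter.Tendsto (fun n => v n - L) Filter.atTop (nhds 0) :=
    squeeze_zero_norm (fun n => by
      rw [Real.norm_eq_abs]; exact le_max_right _ _) hMten
  refine ⟨hpos, ?_, ?_⟩
  · have := huten.add_const L
    simpa using this
  · have := hvten.add_const L
    simpa using this
end

section
/- Let a, b : ℕ → ℂ and let x, y satisfy x(n+2) = a(n)·y(n), y(n+2) = b(n)·x(n). Suppose ψ3, ψ6 : ℕ → ℂ satisfy b(n+1)·ψ6(n+2) = ψ3(n) and a(n+1)·ψ3(n+2) = ψ6(n) for all n. Then φ(n) = ψ3(n)·x(n+1) + ψ6(n)·y(n+1) + b(n)·ψ6(n+1)·x(n) + a(n)·ψ3(n+1)·y(n) is a first integral: φ(n+1) = φ(n) for all n. -/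
theorem stmt_19 (a b : ℕ → ℂ) (x y : ℕ → ℂ)
    (hx : ∀ n, x (n + 2) = a n * y n) (hy : ∀ n, y (n + 2) = b n * x n)
    (ψ3 ψ6 : ℕ → ℂ)
    (h36 : ∀ n, b (n + 1) * ψ6 (n + 2) = ψ3 n)
    (h63 : ∀ n, a (n + 1) * ψ3 (n + 2) = ψ6 n)
    (φ : ℕ → ℂ)
    (hφ : ∀ n, φ n = ψ3 n * x (n + 1) + ψ6 n * y (n + 1)
        + b n * ψ6 (n + 1) * x n + a n * ψ3 (n + 1) * y n) :
    ∀ n, φ (n + 1) = φ n := by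
  intro n
  have h1 : n + 1 + 1 = n + 2 := rfl
  rw [hφ, hφ, h1, hx, hy]
  rw [show b (n + 1) * ψ6 (n + 1 + 1) * x (n + 1)
      = (b (n + 1) * ψ6 (n + 2)) * x (n + 1) by ring, h36,
    show a (n + 1) * ψ3 (n + 1 + 1) * y (n + 1)
      = (a (n + 1) * ψ3 (n + 2)) * y (n + 1) by ring, h63]
  ring
end
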